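/- arXiv:1810.12340 — 3 statements merged into one kernel-verified Lean document; each statement's English description precedes it below -/
import Mathlib

section
/- Let r ≥ 3 and let G be an (r−1)-admissible decomposition of λK_n into k colors, and let B be a proper k-edge-coloring of μK_n ∖ λK_n. In the union decomposition C = G ∪ B of μK_n, every connected component of every color class contains a vertex of degree at most r−2 or at least two vertices of degree at most r−1. Equivalently, no component C of a color class C(i) satisfies ∑_{v∈V(C)} d_{C(i)}(v) ≥ r·|V(C)| − 1. -/
/-! Components of a color class of `G` only grow when the matching `B` is added, while every
degree grows by at most one, so the witnesses of the component condition for `G` at level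
`r - 1` still witness it for `G ∪ B` at level `r`. -/

variable {V : Type*} [Fintype V] [DecidableEq V]

/-- Degree of a vertex in a multigraph given by an edge-multiplicity function. -/
def deg (c : V → V → ℕ) (v : V) : ℕ := ∑ u, c v u

/-- Reachability in a multigraph given by an edge-multiplicity function. -/
def Reach (c : V → V → ℕ) (u w : V) : Prop :=
  Relation.ReflTransGen (fun a b => a ≠ b ∧ 0 < c a b) u w

/-- The connected component of `v`. -/
def comp (c : V → V → ℕ) (v : V) : Set V := {u | Reach c v u}

/-- Remove one copy of the edge `ab`. -/
def removeOne (c : V → V → ℕ) (a b : V) : V → V → ℕ :=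
  fun u w => if (u = a ∧ w = b) ∨ (u = b ∧ w = a) then c u w - 1 else c u w

/-- First admissibility condition: every vertex has degree at most `r`. -/
def DegCond (r : ℕ) (c : V → V → ℕ) : Prop := ∀ v, deg c v ≤ r

/-- Second admissibility condition: every connected component contains a vertex of degree at
most `r - 2`, or at least two vertices of degree at most `r - 1`. -/
def CompCond (r : ℕ) (c : V → V → ℕ) : Prop :=
  ∀ v₀, (∃ v ∈ comp c v₀, deg c v ≤ r - 2) ∨
    ∃ v ∈ comp c v₀, ∃ w ∈ comp c v₀, v ≠ w ∧ deg c v ≤ r - 1 ∧ deg c w ≤ r - 1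

/-- Third admissibility condition: for every cutedge `ab` of a component (an edge whose
removal makes `b` unreachable from `a`), each of the two resulting components contains a
vertex of degree at most `r - 1` (degrees taken in `c`). -/
def CutCond (r : ℕ) (c : V → V → ℕ) : Prop :=
  ∀ a b, 0 < c a b → ¬ Reach (removeOne c a b) a b →
    (∃ v ∈ comp (removeOne c a b) a, deg c v ≤ r - 1) ∧
      ∃ v ∈ comp (removeOne c a b) b, deg c v ≤ r - 1

/-- A color class is `r`-admissible if it satisfies the three conditions of
Definition 1.2 of the paper. -/
def Admissible (r : ℕ) (c : V → V → ℕ) : Prop :=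
  DegCond r c ∧ CompCond r c ∧ CutCond r c

theorem Reach.mono {α : Type*} {c d : α → α → ℕ} (hcd : ∀ a b, c a b ≤ d a b) {u w : α}
    (h : Reach c u w) : Reach d u w :=
  Relation.ReflTransGen.mono (fun a b hab => ⟨hab.1, hab.2.trans_le (hcd a b)⟩) _ _ h

theorem comp_subset_comp {α : Type*} {c d : α → α → ℕ} (hcd : ∀ a b, c a b ≤ d a b) (v : α) :
    comp c v ⊆ comp d v :=
  fun _ hu => Reach.mono hcd hu

theorem CompCond.add_of_deg_le_one {α : Type*} [Fintype α] {r : ℕ} {c d : α → α → ℕ}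
    (hc : CompCond r c) (hd : ∀ v, deg d v ≤ 1) (hr : 2 ≤ r) :
    CompCond (r + 1) (fun a b => c a b + d a b) := by
  intro v₀
  have hcomp := comp_subset_comp (fun a b => Nat.le_add_right (c a b) (d a b)) v₀
  have hdeg : ∀ v, deg (fun a b => c a b + d a b) v ≤ deg c v + 1 := fun v =>
    (Finset.sum_add_distrib).trans_le (Nat.add_le_add_left (hd v) _)
  rcases hc v₀ with ⟨v, hv, hdv⟩ | ⟨v, hv, w, hw, hvw, hdv, hdw⟩
  · exact Or.inl ⟨v, hcomp hv, by have := hdeg v; omega⟩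
  · exact Or.inr ⟨v, hcomp hv, w, hcomp hw, hvw, by have := hdeg v; omega,
      by have := hdeg w; omega⟩

theorem stmt9_general (n k r : ℕ) (hr : 3 ≤ r)
    (G B : Fin k → Fin n → Fin n → ℕ)
    (hGadm : ∀ i, Admissible (r - 1) (G i))
    (hBproper : ∀ i v, deg (B i) v ≤ 1) :
    ∀ i : Fin k, CompCond r (fun a b => G i a b + B i a b) := by
  intro i
  have h := (hGadm i).2.1.add_of_deg_le_one (hBproper i) (by omega)
  rwa [Nat.sub_add_cancel (by omega : 1 ≤ r)] at h

/-- Let `r ≥ 3`, let `G` be an `(r-1)`-admissible decomposition of `λK_n` into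
`k` colors, and let `B` be a proper `k`-edge-coloring of `μK_n ∖ λK_n`.  In the union
decomposition `C = G ∪ B` of `μK_n`, every connected component of every color class contains
a vertex of degree at most `r - 2`, or at least two vertices of degree at most `r - 1`. -/
theorem stmt9 (n k lam mu r : ℕ) (hr : 3 ≤ r) (hlam : 0 < lam) (hle : lam ≤ mu)
    (G B : Fin k → Fin n → Fin n → ℕ)
    (hGsymm : ∀ i u v, G i u v = G i v u) (hGloop : ∀ i v, G i v v = 0)
    (hGdecomp : ∀ u v, u ≠ v → ∑ i, G i u v = lam)
    (hGadm : ∀ i, Admissible (r - 1) (G i))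
    (hBsymm : ∀ i u v, B i u v = B i v u) (hBloop : ∀ i v, B i v v = 0)
    (hBdecomp : ∀ u v, u ≠ v → ∑ i, B i u v = mu - lam)
    (hBproper : ∀ i v, deg (B i) v ≤ 1) :
    ∀ i : Fin k, CompCond r (fun a b => G i a b + B i a b) :=
  stmt9_general n k r hr G B hGadm hBproper
end

section
/- Suppose a decomposition G of λK_n into k colors can be enclosed in a 2-edge-connected r-factorization of μK_m with m > n. Then every vertex v and every color i satisfy d_{G(i)}(v) ≤ r; moreover G is r-admissible. -/
variable {V : Type*} [Fintype V] [DecidableEq V]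

/-!
Fix a colour `i` and a set `S` of vertices of `K_n`. Summing the `r`-regularity of `H i` over
`f S` and using `G i ≤ H i` shows that the total degree deficiency `∑_{v ∈ S} (r - d(v))` is at
least the number of `H i`-edges leaving `f S` minus the number of `G i`-edges leaving `S`. As
`m > n`, `f S` is a nonempty proper subset, so 2-edge-connectivity provides two `H i`-edges
leaving it. A component of `G i` has no leaving edge, hence deficiency at least `2`; a side of a
cutedge has exactly one, hence deficiency at least `1`.
-/

open Finset

section Combinatorics

variable {ι : Type*} {S : Finset ι} {d : ι → ℕ} {r : ℕ}

lemma exists_le_sub_one_of_sum_lt (h : ∑ v ∈ S, d v < r * #S) : ∃ v ∈ S, d v ≤ r - 1 := by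
  rw [mul_comm, ← smul_eq_mul, ← sum_const] at h
  obtain ⟨v, hv, hlt⟩ := exists_lt_of_sum_lt h
  exact ⟨v, hv, by omega⟩

lemma exists_deficient_pair [DecidableEq ι] (h : ∑ v ∈ S, d v + 2 ≤ r * #S) :
    (∃ v ∈ S, d v ≤ r - 2) ∨
      ∃ v ∈ S, ∃ w ∈ S, v ≠ w ∧ d v ≤ r - 1 ∧ d w ≤ r - 1 := by
  obtain ⟨v, hv, hdv⟩ := exists_le_sub_one_of_sum_lt (by omega : ∑ v ∈ S, d v < r * #S)
  by_cases hv2 : d v ≤ r - 2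
  · exact .inl ⟨v, hv, hv2⟩
  have hrest : ∑ w ∈ S.erase v, d w < r * #(S.erase v) := by
    rw [← add_sum_erase S d hv, ← card_erase_add_one hv, mul_add, mul_one] at h
    omega
  obtain ⟨w, hw, hdw⟩ := exists_le_sub_one_of_sum_lt hrest
  exact .inr ⟨v, hv, w, mem_of_mem_erase hw, (ne_of_mem_erase hw).symm, hdv, hdw⟩

end Combinatorics

section Multigraph

variable {α : Type*} {c : α → α → ℕ} {S : Finset α} {u v : α}

lemma Reach.symm (hc : ∀ u w, c u w = c w u) (h : Reach c u v) : Reach c v u := by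
  induction h with
  | refl => exact .refl
  | tail _ hstep ih => exact .head ⟨hstep.1.symm, hc _ _ ▸ hstep.2⟩ ih

lemma Reach.exists_crossing (h : Reach c u v) (hu : u ∈ S) (hv : v ∉ S) :
    ∃ a ∈ S, ∃ b ∉ S, 0 < c a b := by
  induction h with
  | refl => exact absurd hu hv
  | @tail x y _ hstep ih =>
    by_cases hx : x ∈ S
    · exact ⟨x, hx, y, hv, hstep.2⟩
    · exact ih hx

variable [DecidableEq α] {a b : α}

lemma removeOne_comm (c : α → α → ℕ) (a b : α) : removeOne c a b = removeOne c b a := by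
  funext u w
  simp only [removeOne, or_comm]

lemma removeOne_symm (hc : ∀ u w, c u w = c w u) (u w : α) :
    removeOne c a b u w = removeOne c a b w u := by
  simp only [removeOne, hc u w]
  exact if_congr (by tauto) rfl rfl

end Multigraph

section Cut

variable {α : Type*} [Fintype α] {c : α → α → ℕ} {S : Finset α} {a b u v : α}

open Classical in
noncomputable def compFinset (c : α → α → ℕ) (v : α) : Finset α := univ.filter (Reach c v)

lemma mem_compFinset : u ∈ compFinset c v ↔ u ∈ comp c v := by
  simp [compFinset, comp]

variable [DecidableEq α]

def cut (c : α → α → ℕ) (S : Finset α) : ℕ := ∑ x ∈ S, ∑ y ∈ Sᶜ, c x y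

lemma le_cut (ha : a ∈ S) (hb : b ∉ S) : c a b ≤ cut c S :=
  (single_le_sum (f := c a) (fun _ _ => Nat.zero_le _) (mem_compl.2 hb)).trans
    (single_le_sum (f := fun x => ∑ y ∈ Sᶜ, c x y) (fun _ _ => Nat.zero_le _) ha)

lemma Reach.cut_pos (h : Reach c u v) (hu : u ∈ S) (hv : v ∉ S) : 0 < cut c S := by
  obtain ⟨a, ha, b, hb, hab⟩ := h.exists_crossing hu hv
  exact hab.trans_le (le_cut ha hb)

lemma cut_compFinset : cut c (compFinset c v) = 0 := by
  refine sum_eq_zero fun x hx => sum_eq_zero fun y hy => ?_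
  rw [mem_compl] at hy
  by_contra hxy
  have hne : x ≠ y := by rintro rfl; exact hy hx
  rw [mem_compFinset] at hx hy
  exact hy (Relation.ReflTransGen.tail hx ⟨hne, Nat.pos_of_ne_zero hxy⟩)

lemma cut_removeOne_add_one (ha : a ∈ S) (hb : b ∉ S) (hab : 0 < c a b) :
    cut (removeOne c a b) S + 1 = cut c S := by
  have hab' : (a, b) ∈ S ×ˢ Sᶜ := mem_product.2 ⟨ha, mem_compl.2 hb⟩
  have hsame : ∀ p ∈ (S ×ˢ Sᶜ).erase (a, b), removeOne c a b p.1 p.2 = c p.1 p.2 := by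
    rintro ⟨x, y⟩ hp
    obtain ⟨hne, hp⟩ := mem_erase.1 hp
    obtain ⟨hx, hy⟩ := mem_product.1 hp
    have : ¬((x = a ∧ y = b) ∨ (x = b ∧ y = a)) := by
      rintro (⟨rfl, rfl⟩ | ⟨rfl, -⟩)
      · exact hne rfl
      · exact hb hx
    simp only [removeOne, if_neg this]
  simp only [cut, ← sum_product']
  rw [← add_sum_erase _ _ hab', ← add_sum_erase _ _ hab', sum_congr rfl hsame]
  simp only [removeOne, and_self, true_or, if_true]
  omega

lemma two_le_cut (hconn : ∀ u v, Reach c u v)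
    (h2ec : ∀ a b, 0 < c a b → ∀ u v, Reach (removeOne c a b) u v)
    (hu : u ∈ S) (hv : v ∉ S) : 2 ≤ cut c S := by
  obtain ⟨a, ha, b, hb, hab⟩ := (hconn u v).exists_crossing hu hv
  have hpos := (h2ec a b hab u v).cut_pos hu hv
  have := cut_removeOne_add_one ha hb hab
  omega

end Cut

structure IsTwoEdgeConnectedFactor {β : Type*} [Fintype β] [DecidableEq β]
    (r : ℕ) (H : β → β → ℕ) : Prop where
  deg_eq : ∀ w, deg H w = r
  reach : ∀ u v, Reach H u v
  reach_removeOne : ∀ a b, 0 < H a b → ∀ u v, Reach (removeOne H a b) u v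

section Enclosure

variable {α β : Type*} [Fintype α] [Fintype β] {r : ℕ} {f : α ↪ β}
  {H : β → β → ℕ} {G : α → α → ℕ}

lemma deg_le_of_enclosed (hreg : ∀ w, deg H w = r) (hencl : ∀ u v, G u v ≤ H (f u) (f v))
    (v : α) : deg G v ≤ r :=
  calc deg G v ≤ ∑ u, H (f v) (f u) := sum_le_sum fun u _ => hencl v u
    _ = ∑ w ∈ univ.map f, H (f v) w := (sum_map _ _ _).symm
    _ ≤ ∑ w, H (f v) w := sum_le_sum_of_subset (subset_univ _)
    _ = r := hreg (f v)

variable [DecidableEq α] [DecidableEq β]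

lemma sum_deg_add_cut_map_le (hreg : ∀ w, deg H w = r)
    (hencl : ∀ u v, G u v ≤ H (f u) (f v)) (S : Finset α) :
    ∑ v ∈ S, deg G v + cut H (S.map f) ≤ r * #S + cut G S := by
  have hvertex : ∀ v ∈ S,
      deg G v + ∑ w ∈ (S.map f)ᶜ, H (f v) w ≤ r + ∑ u ∈ Sᶜ, G v u := by
    intro v _
    have hG : ∑ u ∈ S, G v u + ∑ u ∈ Sᶜ, G v u = deg G v := sum_add_sum_compl S _
    have hH : ∑ w ∈ S.map f, H (f v) w + ∑ w ∈ (S.map f)ᶜ, H (f v) w = r :=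
      (sum_add_sum_compl _ _).trans (hreg (f v))
    have hGH : ∑ u ∈ S, G v u ≤ ∑ w ∈ S.map f, H (f v) w := by
      rw [sum_map]
      exact sum_le_sum fun u _ => hencl v u
    omega
  calc ∑ v ∈ S, deg G v + cut H (S.map f)
      = ∑ v ∈ S, (deg G v + ∑ w ∈ (S.map f)ᶜ, H (f v) w) := by
        rw [cut, sum_map, sum_add_distrib]
    _ ≤ ∑ v ∈ S, (r + ∑ u ∈ Sᶜ, G v u) := sum_le_sum hvertex
    _ = r * #S + cut G S := by
        rw [sum_add_distrib, sum_const, smul_eq_mul, mul_comm, cut]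

lemma sum_deg_add_two_le (hH : IsTwoEdgeConnectedFactor r H)
    (hencl : ∀ u v, G u v ≤ H (f u) (f v)) (hf : ¬ Function.Surjective f)
    {S : Finset α} (hS : S.Nonempty) :
    ∑ v ∈ S, deg G v + 2 ≤ r * #S + cut G S := by
  obtain ⟨v, hv⟩ := hS
  obtain ⟨w, hw⟩ := not_forall.1 hf
  have hcut : 2 ≤ cut H (S.map f) :=
    two_le_cut hH.reach hH.reach_removeOne (mem_map_of_mem f hv)
      fun hmem => hw ((mem_map.1 hmem).imp fun _ h => h.2)
  have := sum_deg_add_cut_map_le hH.deg_eq hencl S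
  omega

lemma compCond_of_enclosed (hH : IsTwoEdgeConnectedFactor r H)
    (hencl : ∀ u v, G u v ≤ H (f u) (f v)) (hf : ¬ Function.Surjective f) :
    CompCond r G := fun v₀ => by
  have h := sum_deg_add_two_le hH hencl hf (S := compFinset G v₀)
    ⟨v₀, mem_compFinset.2 .refl⟩
  rw [cut_compFinset, add_zero] at h
  simpa only [mem_compFinset] using exists_deficient_pair h

lemma exists_deficient_of_not_reach_removeOne (hH : IsTwoEdgeConnectedFactor r H)
    (hencl : ∀ u v, G u v ≤ H (f u) (f v)) (hf : ¬ Function.Surjective f) {a b : α}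
    (hab : 0 < G a b) (hnr : ¬ Reach (removeOne G a b) a b) :
    ∃ v ∈ comp (removeOne G a b) a, deg G v ≤ r - 1 := by
  set S := compFinset (removeOne G a b) a
  have ha : a ∈ S := mem_compFinset.2 .refl
  have hb : b ∉ S := fun h => hnr (mem_compFinset.1 h)
  have hcut := cut_removeOne_add_one ha hb hab
  rw [cut_compFinset] at hcut
  have h := sum_deg_add_two_le hH hencl hf ⟨a, ha⟩
  obtain ⟨v, hv, hd⟩ := exists_le_sub_one_of_sum_lt (by omega : ∑ v ∈ S, deg G v < r * #S)
  exact ⟨v, mem_compFinset.1 hv, hd⟩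

lemma cutCond_of_enclosed (hH : IsTwoEdgeConnectedFactor r H)
    (hencl : ∀ u v, G u v ≤ H (f u) (f v)) (hf : ¬ Function.Surjective f)
    (hGsymm : ∀ u v, G u v = G v u) : CutCond r G := fun a b hab hnr => by
  refine ⟨exists_deficient_of_not_reach_removeOne hH hencl hf hab hnr, ?_⟩
  rw [removeOne_comm] at hnr ⊢
  exact exists_deficient_of_not_reach_removeOne hH hencl hf (hGsymm a b ▸ hab)
    fun h => hnr (h.symm (removeOne_symm hGsymm))

theorem admissible_of_enclosed (hH : IsTwoEdgeConnectedFactor r H)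
    (hencl : ∀ u v, G u v ≤ H (f u) (f v)) (hf : ¬ Function.Surjective f)
    (hGsymm : ∀ u v, G u v = G v u) : Admissible r G :=
  ⟨deg_le_of_enclosed hH.deg_eq hencl, compCond_of_enclosed hH hencl hf,
    cutCond_of_enclosed hH hencl hf hGsymm⟩

end Enclosure

theorem stmt14_general (r k n m : ℕ) (hnm : n < m)
    (f : Fin n ↪ Fin m)
    (H : Fin k → Fin m → Fin m → ℕ)
    (hHreg : ∀ i v, deg (H i) v = r)
    (hHconn : ∀ (i : Fin k) (u v : Fin m), Reach (H i) u v)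
    (hH2ec : ∀ (i : Fin k) (a b : Fin m), 0 < H i a b →
      ∀ u v, Reach (removeOne (H i) a b) u v)
    (G : Fin k → Fin n → Fin n → ℕ)
    (hGsymm : ∀ i u v, G i u v = G i v u)
    (hencl : ∀ i u v, G i u v ≤ H i (f u) (f v)) :
    (∀ (i : Fin k) (v : Fin n), deg (G i) v ≤ r) ∧ ∀ i, Admissible r (G i) := by
  have hf : ¬ Function.Surjective f := fun hsurj =>
    (Fintype.card_le_of_surjective f hsurj).not_gt (by simpa using hnm)
  exact ⟨fun i => deg_le_of_enclosed (hHreg i) (hencl i),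
    fun i => admissible_of_enclosed ⟨hHreg i, hHconn i, hH2ec i⟩ (hencl i) hf (hGsymm i)⟩

/-- Suppose a decomposition `G` of `λK_n` into `k` colors is enclosed (via an
embedding `f` of the `n` vertices into the `m` vertices, `m > n`) in a 2-edge-connected
`r`-factorization `H` of `μK_m`: each `H i` is spanning `r`-regular, connected, and remains
connected after removal of any single edge.  Then every vertex has degree at most `r` in
every color class of `G`, and moreover `G` is `r`-admissible. -/
theorem stmt14 (lam mu r k n m : ℕ) (hlam : 0 < lam) (hle : lam ≤ mu)
    (hr : 2 ≤ r) (hnm : n < m)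
    (f : Fin n ↪ Fin m)
    (H : Fin k → Fin m → Fin m → ℕ)
    (hHsymm : ∀ i u v, H i u v = H i v u) (hHloop : ∀ i v, H i v v = 0)
    (hHdecomp : ∀ u v, u ≠ v → ∑ i, H i u v = mu)
    (hHreg : ∀ i v, deg (H i) v = r)
    (hHconn : ∀ (i : Fin k) (u v : Fin m), Reach (H i) u v)
    (hH2ec : ∀ (i : Fin k) (a b : Fin m), 0 < H i a b →
      ∀ u v, Reach (removeOne (H i) a b) u v)
    (G : Fin k → Fin n → Fin n → ℕ)
    (hGsymm : ∀ i u v, G i u v = G i v u) (hGloop : ∀ i v, G i v v = 0)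
    (hGdecomp : ∀ u v, u ≠ v → ∑ i, G i u v = lam)
    (hencl : ∀ i u v, G i u v ≤ H i (f u) (f v)) :
    (∀ (i : Fin k) (v : Fin n), deg (G i) v ≤ r) ∧ ∀ i, Admissible r (G i) :=
  stmt14_general r k n m hnm f H hHreg hHconn hH2ec G hGsymm hencl
end

section
/- Let H be a bipartite graph with parts V and W. Suppose V is partitioned into a set V₀ of vertices adjacent to every vertex of W, and for each unordered pair {u,v} from a ground set, a set V_{uv} of 'special' vertices each adjacent to every vertex of W except those in a fixed subset W_{uv} ⊆ W. If |V| ≤ |W| and for every pair {u,v}, |V_{uv}| ≤ |W| − |W_{uv}|, then H has a matching saturating V. -/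
/-- Let `H` be a bipartite graph with parts `V` and `W` (given by an adjacency
relation `Adj : V → W → Prop`).  Suppose `V` is partitioned into a set `V₀` of vertices
adjacent to every vertex of `W` and, for each pair `p` from a ground index type `ι`, a set
`Vsp p` of special vertices, each adjacent exactly to the vertices of `W` outside a fixed
subset `Wex p ⊆ W` (the subsets `Wex p` for distinct pairs being disjoint, as the `uv`-edges
for distinct pairs `{u,v}` are).  If `|V| ≤ |W|` and `|Vsp p| ≤ |W| - |Wex p|` for every
pair `p`, then `H` has a matching saturating `V`. -/
theorem stmt16 {V W ι : Type*} [Fintype V] [Fintype W] [DecidableEq V] [DecidableEq W]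
    (Adj : V → W → Prop)
    (V0 : Finset V) (Vsp : ι → Finset V) (Wex : ι → Finset W)
    (hcover : ∀ v : V, v ∈ V0 ∨ ∃ p, v ∈ Vsp p)
    (hdisj0 : ∀ p, Disjoint V0 (Vsp p))
    (hdisjV : ∀ p q, p ≠ q → Disjoint (Vsp p) (Vsp q))
    (hV0adj : ∀ v ∈ V0, ∀ w, Adj v w)
    (hspadj : ∀ p, ∀ v ∈ Vsp p, ∀ w, Adj v w ↔ w ∉ Wex p)
    (hdisjW : ∀ p q, p ≠ q → Disjoint (Wex p) (Wex q))
    (hVW : Fintype.card V ≤ Fintype.card W)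
    (hsp : ∀ p, (Vsp p).card ≤ Fintype.card W - (Wex p).card) :
    ∃ f : V → W, Function.Injective f ∧ ∀ v, Adj v (f v) := by
  classical
  let t : V → Finset W := fun v => Finset.univ.filter (fun w => Adj v w)
  have hall : ∀ s : Finset V, s.card ≤ (s.biUnion t).card := by
    intro s
    rcases s.eq_empty_or_nonempty with rfl | ⟨v0, hv0⟩
    · simp
    by_cases h : ∃ p, s ⊆ Vsp p
    · obtain ⟨p, hp⟩ := h
      have h2 : Finset.univ \ Wex p ⊆ s.biUnion t := by
        intro w hw
        simp only [Finset.mem_sdiff, Finset.mem_univ, true_and] at hw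
        refine Finset.mem_biUnion.2 ⟨v0, hv0, ?_⟩
        simp only [t, Finset.mem_filter, Finset.mem_univ, true_and]
        exact (hspadj p v0 (hp hv0) w).2 hw
      calc s.card ≤ Fintype.card W - (Wex p).card :=
            le_trans (Finset.card_le_card hp) (hsp p)
        _ = (Finset.univ \ Wex p).card := by
            rw [Finset.card_sdiff_of_subset (Finset.subset_univ _), Finset.card_univ]
        _ ≤ _ := Finset.card_le_card h2
    · have h2 : (Finset.univ : Finset W) ⊆ s.biUnion t := by
        intro w _
        have key : ∃ v ∈ s, Adj v w := by
          rcases hcover v0 with hv | ⟨p, hvp⟩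
          · exact ⟨v0, hv0, hV0adj v0 hv w⟩
          by_cases hw : w ∈ Wex p
          · have hns : ¬ s ⊆ Vsp p := fun hs => h ⟨p, hs⟩
            obtain ⟨v1, hv1s, hv1p⟩ := Finset.not_subset.1 hns
            rcases hcover v1 with hv | ⟨q, hvq⟩
            · exact ⟨v1, hv1s, hV0adj v1 hv w⟩
            · have hne : p ≠ q := fun e => hv1p (e ▸ hvq)
              have : w ∉ Wex q := Finset.disjoint_left.1 (hdisjW p q hne) hw
              exact ⟨v1, hv1s, (hspadj q v1 hvq w).2 this⟩
          · exact ⟨v0, hv0, (hspadj p v0 hvp w).2 hw⟩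
        obtain ⟨v, hvs, hadj⟩ := key
        refine Finset.mem_biUnion.2 ⟨v, hvs, ?_⟩
        simp only [t, Finset.mem_filter, Finset.mem_univ, true_and]
        exact hadj
      calc s.card ≤ Fintype.card V := by
            simpa using Finset.card_le_univ s
        _ ≤ Fintype.card W := hVW
        _ = (Finset.univ : Finset W).card := (Finset.card_univ).symm
        _ ≤ _ := Finset.card_le_card h2
  obtain ⟨f, hf, hft⟩ := (Finset.all_card_le_biUnion_card_iff_existsInjective' t).1 hall
  refine ⟨f, hf, fun v => ?_⟩
  have := hft v
  simpa [t] using this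
end
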